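/- Let H and V be Hermitian d×d complex matrices, let β ∈ ℝ, and for s ∈ [0,1] set H(s) := H − (1−s)V. Then for every d×d complex matrix A, Tr(A · g[H−V](β)) − Tr(A · g[H](β)) = β · ∫₀¹ ∫₀¹ cov^τ_{H(s),β}(A, V) dτ ds, where g[K](β) := e^{−βK}/Tr(e^{−βK}) and cov^τ_{K,β}(A,B) := Tr( e^{−τβK} A e^{−(1−τ)βK} B ) / Tr(e^{−βK}) − Tr(g[K](β) A) · Tr(g[K](β) B). -/

import Mathlib

/-!
Write `N(s) = -β (H - V + s V)`, so that `Tr(A g[H - V + sV](β)) = Tr(A e^{N(s)}) / Tr e^{N(s)}`.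
Duhamel's formula `e^P - e^Q = ∫₀¹ e^{(1-τ)Q} (P - Q) e^{τP} dτ` gives
`d/ds e^{N(s)} = -β ∫₀¹ e^{(1-τ)N(s)} V e^{τN(s)} dτ`; by the quotient rule and cyclicity of the
trace, the derivative of `s ↦ Tr(A g[H - V + sV](β))` is `-β ∫₀¹ cov^τ_{H(s),β}(A, V) dτ`, and the
fundamental theorem of calculus on `[0, 1]` gives the formula. The partition function never
vanishes: for Hermitian `N`, `e^N = (e^{N/2})ᴴ e^{N/2}` with `e^{N/2}` invertible.
-/

open Matrix Complex

/-- `e^{-b K}` for a matrix `K` and a real parameter `b`. -/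
noncomputable def mexp {d : ℕ} (K : Matrix (Fin d) (Fin d) ℂ) (b : ℝ) :
    Matrix (Fin d) (Fin d) ℂ :=
  NormedSpace.exp ((-(b : ℂ)) • K)

/-- The Gibbs state `g[K](β) = e^{-βK} / Tr e^{-βK}`. -/
noncomputable def gibbs {d : ℕ} (K : Matrix (Fin d) (Fin d) ℂ) (β : ℝ) :
    Matrix (Fin d) (Fin d) ℂ :=
  ((mexp K β).trace)⁻¹ • mexp K β

/-- The generalised covariance
`cov^τ_{K,β}(A,B) = Tr(e^{-τβK} A e^{-(1-τ)βK} B)/Tr(e^{-βK}) - Tr(g A) Tr(g B)`. -/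
noncomputable def gcov {d : ℕ} (K : Matrix (Fin d) (Fin d) ℂ) (β τ : ℝ)
    (A B : Matrix (Fin d) (Fin d) ℂ) : ℂ :=
  (mexp K (τ * β) * A * mexp K ((1 - τ) * β) * B).trace / (mexp K β).trace
    - (gibbs K β * A).trace * (gibbs K β * B).trace

open NormedSpace intervalIntegral

theorem hasDerivAt_of_sub_eq_smul {𝕜 E : Type*} [NontriviallyNormedField 𝕜] [NormedAddCommGroup E]
    [NormedSpace 𝕜 E] {f Φ : 𝕜 → E} {a : 𝕜} (hΦ : ContinuousAt Φ a)
    (hf : ∀ s, f s - f a = (s - a) • Φ s) : HasDerivAt f (Φ a) a := by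
  rw [hasDerivAt_iff_tendsto_slope]
  refine (hΦ.tendsto.mono_left nhdsWithin_le_nhds).congr' ?_
  filter_upwards [self_mem_nhdsWithin] with s hs
  rw [slope_def_module, hf, smul_smul, inv_mul_cancel₀ (sub_ne_zero.mpr hs), one_smul]

section Duhamel

variable {𝔸 : Type*} [NormedRing 𝔸] [NormedAlgebra ℝ 𝔸] [CompleteSpace 𝔸]

@[fun_prop]
theorem continuous_exp_of_real_algebra : Continuous (exp : 𝔸 → 𝔸) :=
  continuous_iff_continuousAt.2 fun x => (exp_analytic (𝕂 := ℝ) x).continuousAt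

theorem hasDerivAt_exp_one_sub_smul_mul_exp_smul (P Q : 𝔸) (τ : ℝ) :
    HasDerivAt (fun τ : ℝ => exp ((1 - τ) • Q) * exp (τ • P))
      (exp ((1 - τ) • Q) * (P - Q) * exp (τ • P)) τ := by
  have hQ : HasDerivAt (fun τ : ℝ => exp ((1 - τ) • Q)) (-(exp ((1 - τ) • Q) * Q)) τ := by
    simpa [Function.comp_def] using
      (hasDerivAt_exp_smul_const Q (1 - τ)).scomp τ ((hasDerivAt_id τ).const_sub 1)
  refine (hQ.mul (hasDerivAt_exp_smul_const' P τ)).congr_deriv ?_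
  noncomm_ring

theorem exp_sub_exp_eq_integral (P Q : 𝔸) :
    exp P - exp Q = ∫ τ in (0:ℝ)..1, exp ((1 - τ) • Q) * (P - Q) * exp (τ • P) := by
  rw [integral_eq_sub_of_hasDerivAt (fun τ _ => hasDerivAt_exp_one_sub_smul_mul_exp_smul P Q τ)
    (Continuous.intervalIntegrable (by fun_prop) _ _)]
  simp

theorem hasDerivAt_exp_add_smul (X W : 𝔸) (s₀ : ℝ) :
    HasDerivAt (fun s : ℝ => exp (X + s • W))
      (∫ τ in (0:ℝ)..1, exp ((1 - τ) • (X + s₀ • W)) * W * exp (τ • (X + s₀ • W))) s₀ := by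
  refine hasDerivAt_of_sub_eq_smul (Φ := fun s : ℝ =>
      ∫ τ in (0:ℝ)..1, exp ((1 - τ) • (X + s₀ • W)) * W * exp (τ • (X + s • W)))
    (continuous_parametric_intervalIntegral_of_continuous' (by fun_prop) 0 1).continuousAt
    fun s => ?_
  -- Duhamel between `X + s • W` and `X + s₀ • W` factors out `s - s₀` exactly.
  rw [exp_sub_exp_eq_integral, ← integral_smul]
  congr 1 with τ
  rw [show X + s • W - (X + s₀ • W) = (s - s₀) • W by rw [sub_smul]; abel, mul_smul_comm,
    smul_mul_assoc]

theorem hasDerivAt_map_exp_add_smul {F : Type*} [NormedAddCommGroup F] [NormedSpace ℝ F]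
    [CompleteSpace F] (L : 𝔸 →L[ℝ] F) (X W : 𝔸) (s₀ : ℝ) :
    HasDerivAt (fun s : ℝ => L (exp (X + s • W)))
      (∫ τ in (0:ℝ)..1, L (exp ((1 - τ) • (X + s₀ • W)) * W * exp (τ • (X + s₀ • W)))) s₀ := by
  rw [L.intervalIntegral_comp_comm (Continuous.intervalIntegrable (by fun_prop) _ _)]
  exact L.hasFDerivAt.comp_hasDerivAt s₀ (hasDerivAt_exp_add_smul X W s₀)

end Duhamel

open scoped ComplexOrder

section Gibbs

-- Any submultiplicative norm makes matrices a Banach algebra; none appears in the statements.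
attribute [local instance] Matrix.linftyOpNormedRing Matrix.linftyOpNormedAlgebra

theorem Matrix.IsHermitian.trace_exp_ne_zero {n : Type*} [Fintype n] [DecidableEq n] [Nonempty n]
    {K : Matrix n n ℂ} (hK : K.IsHermitian) : (NormedSpace.exp K).trace ≠ 0 := by
  set B := NormedSpace.exp ((2⁻¹ : ℝ) • K)
  have hB : B.IsHermitian := (hK.smul (IsSelfAdjoint.all (2⁻¹ : ℝ))).exp
  have hsq : NormedSpace.exp K = Bᴴ * B := by
    rw [hB.eq, ← Matrix.exp_add_of_commute _ _ (Commute.refl _), ← add_smul]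
    norm_num
  rw [hsq, Ne, Matrix.trace_conjTranspose_mul_self_eq_zero_iff]
  exact (Matrix.isUnit_exp _).ne_zero

theorem hasDerivAt_trace_mul_exp_add_smul {n : Type*} [Fintype n] [DecidableEq n]
    (C X W : Matrix n n ℂ) (s₀ : ℝ) :
    HasDerivAt (fun s : ℝ => (C * exp (X + s • W)).trace)
      (∫ τ in (0:ℝ)..1,
        (C * (exp ((1 - τ) • (X + s₀ • W)) * W * exp (τ • (X + s₀ • W)))).trace) s₀ :=
  hasDerivAt_map_exp_add_smul
    ((Matrix.traceLinearMap n ℝ ℂ ∘ₗ LinearMap.mulLeft ℝ C).toContinuousLinearMap) X W s₀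

theorem trace_exp_one_sub_smul_mul_mul_exp_smul {n : Type*} [Fintype n] [DecidableEq n]
    (N W : Matrix n n ℂ) (τ : ℝ) :
    (exp ((1 - τ) • N) * W * exp (τ • N)).trace = (W * exp N).trace := by
  rw [Matrix.trace_mul_comm, ← Matrix.mul_assoc,
    ← Matrix.exp_add_of_commute _ _ ((Commute.refl N).smul_left _ |>.smul_right _), ← add_smul,
    add_sub_cancel, one_smul, Matrix.trace_mul_comm]

variable {d : ℕ}

theorem mexp_mul (K : Matrix (Fin d) (Fin d) ℂ) (τ β : ℝ) :
    mexp K (τ * β) = exp (τ • (-(β : ℂ) • K)) := by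
  rw [mexp, ← Complex.coe_smul, smul_smul]
  push_cast
  ring_nf

theorem trace_mexp_ne_zero [NeZero d] {K : Matrix (Fin d) (Fin d) ℂ} (hK : K.IsHermitian) (β : ℝ) :
    (mexp K β).trace ≠ 0 := by
  rw [mexp, show -(β : ℂ) • K = (-β : ℝ) • K by rw [← Complex.coe_smul, Complex.ofReal_neg]]
  exact (hK.smul (IsSelfAdjoint.all _)).trace_exp_ne_zero

theorem trace_mul_gibbs (A K : Matrix (Fin d) (Fin d) ℂ) (β : ℝ) :
    (A * gibbs K β).trace = (A * mexp K β).trace / (mexp K β).trace := by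
  rw [gibbs, Matrix.mul_smul, Matrix.trace_smul, smul_eq_mul, inv_mul_eq_div]

theorem trace_gibbs_mul (K A : Matrix (Fin d) (Fin d) ℂ) (β : ℝ) :
    (gibbs K β * A).trace = (A * mexp K β).trace / (mexp K β).trace := by
  rw [Matrix.trace_mul_comm, trace_mul_gibbs]

theorem integral_gcov (K A B : Matrix (Fin d) (Fin d) ℂ) (β : ℝ) :
    ∫ τ in (0:ℝ)..1, gcov K β τ A B
      = (∫ τ in (0:ℝ)..1, (mexp K (τ * β) * A * mexp K ((1 - τ) * β) * B).trace) / (mexp K β).trace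
        - (gibbs K β * A).trace * (gibbs K β * B).trace := by
  have hcont : Continuous fun τ : ℝ => (mexp K (τ * β) * A * mexp K ((1 - τ) * β) * B).trace := by
    simp only [mexp_mul]
    fun_prop
  simp only [gcov]
  rw [integral_sub ((hcont.div_const _).intervalIntegrable _ _) intervalIntegrable_const,
    integral_div, integral_const]
  simp

theorem hasDerivAt_trace_mul_gibbs_add_smul (K V A : Matrix (Fin d) (Fin d) ℂ) (β s₀ : ℝ)
    (hZ : (mexp (K + (s₀ : ℂ) • V) β).trace ≠ 0) :
    HasDerivAt (fun s : ℝ => (A * gibbs (K + (s : ℂ) • V) β).trace)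
      (-β * ∫ τ in (0:ℝ)..1, gcov (K + (s₀ : ℂ) • V) β τ A V) s₀ := by
  have hpath : ∀ s : ℝ, -(β : ℂ) • (K + (s : ℂ) • V) = -(β : ℂ) • K + s • (-(β : ℂ) • V) :=
    fun s => by rw [← Complex.coe_smul]; module
  rw [integral_gcov, trace_gibbs_mul, trace_gibbs_mul]
  simp only [trace_mul_gibbs, mexp_mul]
  simp only [mexp, hpath] at hZ ⊢
  have hA := hasDerivAt_trace_mul_exp_add_smul A (-(β : ℂ) • K) (-(β : ℂ) • V) s₀
  have h1 := hasDerivAt_trace_mul_exp_add_smul 1 (-(β : ℂ) • K) (-(β : ℂ) • V) s₀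
  simp only [one_mul] at h1
  refine (hA.div h1 hZ).congr_deriv ?_
  set N := -(β : ℂ) • K + s₀ • -(β : ℂ) • V
  have hnum : ∀ τ : ℝ, (A * (exp ((1 - τ) • N) * -(β : ℂ) • V * exp (τ • N))).trace
      = -β * (exp (τ • N) * A * exp ((1 - τ) • N) * V).trace := fun τ => by
    rw [mul_smul_comm, smul_mul_assoc, Matrix.mul_smul, trace_smul, smul_eq_mul,
      ← Matrix.mul_assoc, Matrix.trace_mul_comm]
    simp only [Matrix.mul_assoc]
  have hden : ∀ τ : ℝ, (exp ((1 - τ) • N) * -(β : ℂ) • V * exp (τ • N)).trace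
      = -β * (V * exp N).trace := fun τ => by
    rw [trace_exp_one_sub_smul_mul_mul_exp_smul, Matrix.smul_mul, trace_smul, smul_eq_mul]
  simp only [hnum, hden, integral_const_mul, integral_const, sub_zero, one_smul]
  field_simp
  ring

theorem continuous_integral_gcov_add_smul (K V A B : Matrix (Fin d) (Fin d) ℂ) (β : ℝ)
    (hZ : ∀ s : ℝ, (mexp (K + (s : ℂ) • V) β).trace ≠ 0) :
    Continuous fun s : ℝ => ∫ τ in (0:ℝ)..1, gcov (K + (s : ℂ) • V) β τ A B := by
  refine continuous_parametric_intervalIntegral_of_continuous' ?_ 0 1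
  simp only [gcov, gibbs, mexp] at hZ ⊢
  fun_prop (disch := exact fun p => hZ p.1)

end Gibbs

/-- **Truncation formula.** For Hermitian `H`, `V` and `H(s) := H - (1-s)V`,
`Tr(A g[H-V](β)) - Tr(A g[H](β)) = β ∫₀¹∫₀¹ cov^τ_{H(s),β}(A, V) dτ ds`. -/
theorem truncation_formula {d : ℕ}
    (H V : Matrix (Fin d) (Fin d) ℂ) (hH : H.IsHermitian) (hV : V.IsHermitian)
    (β : ℝ) (A : Matrix (Fin d) (Fin d) ℂ) :
    (A * gibbs (H - V) β).trace - (A * gibbs H β).trace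
      = (β : ℂ) * ∫ s in (0:ℝ)..1, ∫ τ in (0:ℝ)..1, gcov (H - ((1 - s : ℝ) : ℂ) • V) β τ A V := by
  rcases eq_or_ne d 0 with rfl | hd
  · simp [gcov, Matrix.trace]
  have : NeZero d := ⟨hd⟩
  have hpath : ∀ s : ℝ, H - ((1 - s : ℝ) : ℂ) • V = H - V + (s : ℂ) • V := fun s => by
    push_cast; module
  have hZ : ∀ s : ℝ, (mexp (H - V + (s : ℂ) • V) β).trace ≠ 0 := fun s => by
    refine trace_mexp_ne_zero ((hH.sub hV).add ?_) β
    simpa [Complex.coe_smul] using hV.smul (IsSelfAdjoint.all s)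
  simp_rw [hpath]
  have hFTC := integral_eq_sub_of_hasDerivAt
    (fun s _ => hasDerivAt_trace_mul_gibbs_add_smul (H - V) V A β s (hZ s))
    ((continuous_integral_gcov_add_smul (H - V) V A V β hZ).const_mul _ |>.intervalIntegrable 0 1)
  rw [integral_const_mul] at hFTC
  simp only [Complex.ofReal_one, Complex.ofReal_zero, one_smul, zero_smul, sub_add_cancel,
    add_zero] at hFTC
  linear_combination hFTC
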